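/- After SignHunter completes all rounds at granularity levels h = 0,1,...,⌈log₂ n⌉ (flipping, at level h, each of the 2^h contiguous blocks of length ⌈n/2^h⌉ and retaining/reverting by the greedy rule), every coordinate has been flipped in isolation at the finest level; consequently, if all g_i ≠ 0, the final sign vector equals sgn(g), and the total number of oracle evaluations is at most 2^{⌈log₂ n⌉ + 1}. -/

import Mathlib

/-!
Flipping a block `B` changes the objective `∑ sⱼ gⱼ` by `-2 ∑_{j ∈ B} sⱼ gⱼ`, so the greedy step
keeps the flip exactly when `∑_{j ∈ B} sⱼ gⱼ ≤ 0`. At the finest level `⌈log₂ n⌉` the blocks are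
the singletons `{0}, {1}, …` in order, so coordinate `i` is set to `sgn gᵢ` when its own block is
processed (this needs `sᵢ = ±1` and `gᵢ ≠ 0`) and is untouched afterwards. The number of
evaluations is `∑_{h ≤ ⌈log₂ n⌉} 2^h = 2^{⌈log₂ n⌉ + 1} - 1`.
-/

/-- Flip the coordinates of `s` lying in the block `B`. -/
def blockFlip {n : ℕ} (B : Finset (Fin n)) (s : Fin n → ℝ) : Fin n → ℝ :=
  fun i => if i ∈ B then -s i else s i

/-- One greedy step: flip the block, retain iff the oracle value does not decrease. -/
noncomputable def greedyStep {n : ℕ} (g : Fin n → ℝ) (s : Fin n → ℝ) (B : Finset (Fin n)) : Fin n → ℝ :=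
  let s' := blockFlip B s
  if (∑ j, s j * g j) ≤ (∑ j, s' j * g j) then s' else s

/-- The j-th contiguous block of length ⌈n/2^h⌉ at granularity level h. -/
def levelBlock (n h j : ℕ) : Finset (Fin n) :=
  Finset.univ.filter (fun i : Fin n =>
    j * ((n + 2 ^ h - 1) / 2 ^ h) ≤ (i : ℕ) ∧ (i : ℕ) < (j + 1) * ((n + 2 ^ h - 1) / 2 ^ h))

/-- The full SignHunter schedule: at each level h = 0,…,⌈log₂ n⌉ flip each of the 2^h
blocks in turn. -/
def signHunterSchedule (n : ℕ) : List (Finset (Fin n)) :=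
  (List.range (Nat.clog 2 n + 1)).flatMap
    (fun h => (List.range (2 ^ h)).map (fun j => levelBlock n h j))

section

variable {n : ℕ}

def IsSignVector (s : Fin n → ℝ) : Prop :=
  ∀ i, s i = 1 ∨ s i = -1

lemma IsSignVector.blockFlip {s : Fin n → ℝ} (hs : IsSignVector s) (B : Finset (Fin n)) :
    IsSignVector (blockFlip B s) := by
  intro i
  unfold _root_.blockFlip
  split_ifs
  · rcases hs i with h | h <;> simp [h]
  · exact hs i

lemma greedyStep_eq_blockFlip_or_eq (g s : Fin n → ℝ) (B : Finset (Fin n)) :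
    greedyStep g s B = blockFlip B s ∨ greedyStep g s B = s := by
  dsimp only [greedyStep]
  split_ifs <;> simp

lemma IsSignVector.greedyStep {s : Fin n → ℝ} (hs : IsSignVector s) (g : Fin n → ℝ)
    (B : Finset (Fin n)) : IsSignVector (_root_.greedyStep g s B) := by
  rcases greedyStep_eq_blockFlip_or_eq g s B with h | h <;> rw [h]
  exacts [hs.blockFlip B, hs]

lemma IsSignVector.foldl_greedyStep {s : Fin n → ℝ} (hs : IsSignVector s) (g : Fin n → ℝ)
    (l : List (Finset (Fin n))) : IsSignVector (l.foldl (_root_.greedyStep g) s) := by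
  induction l generalizing s with
  | nil => exact hs
  | cons B l ih => exact ih (hs.greedyStep g B)

lemma greedyStep_apply_of_notMem (g s : Fin n → ℝ) {B : Finset (Fin n)} {i : Fin n}
    (hi : i ∉ B) : greedyStep g s B i = s i := by
  rcases greedyStep_eq_blockFlip_or_eq g s B with h | h <;> simp [h, blockFlip, hi]

lemma sum_blockFlip_mul (B : Finset (Fin n)) (s g : Fin n → ℝ) :
    ∑ j, blockFlip B s j * g j = ∑ j, s j * g j - 2 * ∑ j ∈ B, s j * g j := by
  have h : ∀ j, blockFlip B s j * g j = s j * g j - 2 * if j ∈ B then s j * g j else 0 := by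
    intro j
    unfold blockFlip
    split_ifs <;> ring
  simp only [h, Finset.sum_sub_distrib, ← Finset.mul_sum, Finset.sum_ite_mem, Finset.univ_inter]

lemma greedyStep_eq_ite (g s : Fin n → ℝ) (B : Finset (Fin n)) :
    greedyStep g s B = if ∑ j ∈ B, s j * g j ≤ 0 then blockFlip B s else s := by
  have key : (∑ j, s j * g j ≤ ∑ j, s j * g j - 2 * ∑ j ∈ B, s j * g j) ↔
      ∑ j ∈ B, s j * g j ≤ 0 := by
    constructor <;> intro h <;> linarith
  simp only [greedyStep, sum_blockFlip_mul, key]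

lemma greedyStep_singleton_apply (g : Fin n → ℝ) {s : Fin n → ℝ} (i : Fin n)
    (hs : s i = 1 ∨ s i = -1) (hg : g i ≠ 0) :
    greedyStep g s {i} i = if 0 < g i then 1 else -1 := by
  rw [greedyStep_eq_ite, Finset.sum_singleton]
  rcases hs with h | h <;> rcases hg.lt_or_gt with hg' | hg' <;>
    simp [h, hg', blockFlip, not_lt_of_gt hg', hg'.le, hg'.not_ge]

lemma mem_levelBlock_clog (i : Fin n) (j : ℕ) :
    i ∈ levelBlock n (Nat.clog 2 n) j ↔ (i : ℕ) = j := by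
  have hn : n ≤ 2 ^ Nat.clog 2 n := Nat.le_pow_clog one_lt_two n
  have hlen : (n + 2 ^ Nat.clog 2 n - 1) / 2 ^ Nat.clog 2 n = 1 := by
    rw [Nat.div_eq_iff (by positivity)]
    have : 0 < n := i.pos
    omega
  simp only [levelBlock, hlen, Finset.mem_filter, Finset.mem_univ, true_and]
  omega

lemma levelBlock_clog_eq_singleton (i : Fin n) : levelBlock n (Nat.clog 2 n) i = {i} := by
  ext k
  rw [mem_levelBlock_clog, Finset.mem_singleton, Fin.val_inj]

lemma foldl_greedyStep_finestLevel_apply (g : Fin n → ℝ) {s : Fin n → ℝ} (hs : IsSignVector s)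
    {i : Fin n} (hg : g i ≠ 0) {m : ℕ} (hi : (i : ℕ) < m) :
    ((List.range m).map (levelBlock n (Nat.clog 2 n))).foldl (greedyStep g) s i
      = if 0 < g i then 1 else -1 := by
  induction m with
  | zero => omega
  | succ m ih =>
    rw [List.range_succ, List.map_append, List.foldl_append, List.map_singleton,
      List.foldl_cons, List.foldl_nil]
    rcases (Nat.lt_succ_iff.mp hi).lt_or_eq with hlt | rfl
    · rw [greedyStep_apply_of_notMem g _ (by rw [mem_levelBlock_clog]; omega), ih hlt]
    · rw [levelBlock_clog_eq_singleton]
      exact greedyStep_singleton_apply g i ((hs.foldl_greedyStep g _) i) hg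

end

lemma signHunterSchedule_eq_append (n : ℕ) :
    signHunterSchedule n =
      (List.range (Nat.clog 2 n)).flatMap
          (fun h => (List.range (2 ^ h)).map (levelBlock n h)) ++
        (List.range (2 ^ Nat.clog 2 n)).map (levelBlock n (Nat.clog 2 n)) := by
  rw [signHunterSchedule, List.range_succ, List.flatMap_append, List.flatMap_singleton]

lemma sum_map_range_two_pow (k : ℕ) : ((List.range k).map (2 ^ ·)).sum = 2 ^ k - 1 := by
  induction k with
  | zero => rfl
  | succ k ih =>
    rw [List.sum_range_succ, ih, pow_succ]
    have : 1 ≤ 2 ^ k := Nat.one_le_two_pow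
    omega

lemma length_signHunterSchedule (n : ℕ) :
    (signHunterSchedule n).length = 2 ^ (Nat.clog 2 n + 1) - 1 := by
  simp only [signHunterSchedule, List.length_flatMap, List.length_map, List.length_range,
    sum_map_range_two_pow]

theorem signhunter_recovers_sign_general (n : ℕ) (g : Fin n → ℝ) (hg : ∀ i, g i ≠ 0)
    (s0 : Fin n → ℝ) (hs0 : ∀ i, s0 i = 1 ∨ s0 i = -1) :
    (signHunterSchedule n).foldl (greedyStep g) s0
      = (fun i => if 0 < g i then (1 : ℝ) else -1) ∧
    (signHunterSchedule n).length ≤ 2 ^ (Nat.clog 2 n + 1) := by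
  refine ⟨funext fun i => ?_, (length_signHunterSchedule n).trans_le (Nat.sub_le _ _)⟩
  have hi : (i : ℕ) < 2 ^ Nat.clog 2 n := i.isLt.trans_le (Nat.le_pow_clog one_lt_two n)
  rw [signHunterSchedule_eq_append, List.foldl_append]
  exact foldl_greedyStep_finestLevel_apply g (IsSignVector.foldl_greedyStep hs0 g _) (hg i) hi

/-- after completing all granularity levels, SignHunter's final sign vector
equals sgn(g) (all gᵢ ≠ 0), using at most 2^{⌈log₂ n⌉ + 1} oracle evaluations. -/
theorem signhunter_recovers_sign (n : ℕ) (hn : 1 ≤ n) (g : Fin n → ℝ) (hg : ∀ i, g i ≠ 0)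
    (s0 : Fin n → ℝ) (hs0 : ∀ i, s0 i = 1 ∨ s0 i = -1) :
    (signHunterSchedule n).foldl (greedyStep g) s0
      = (fun i => if 0 < g i then (1 : ℝ) else -1) ∧
    (signHunterSchedule n).length ≤ 2 ^ (Nat.clog 2 n + 1) :=
  signhunter_recovers_sign_general n g hg s0 hs0
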